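/- Let (qᵢ) and (pᵢ) be probability distributions with Rényi entropies S_{1/2}(q) = 2 log(Σᵢ √qᵢ) and S_α(p) = (1/(1-α)) log(Σᵢ pᵢ^α) for some α > 1. If a real number c satisfies c ≤ Σᵢ √(qᵢ pᵢ) and c > 0, then S_α(p) ≤ S_{1/2}(q) - (2α/(α-1)) log c. -/

import Mathlib

/-!
Write `√(qᵢpᵢ) = √qᵢ · √pᵢ` and apply the weighted Hölder inequality with weights `√qᵢ` and
exponent `α`: `∑ √(qp) ≤ (∑ √q)^(1 - 1/α) (∑ √q p^(α/2))^(1/α)`. Cauchy–Schwarz bounds the last sum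
by `(∑ q)^(1/2) (∑ p^α)^(1/2)`, so `c ≤ (∑ √q)^(1 - 1/α) (∑ p^α)^(1/(2α))`; taking logarithms and
multiplying by `2α/(α - 1)` gives the claim.
-/

open Finset Real

theorem Real.rpow_sqrt {x : ℝ} (hx : 0 ≤ x) (y : ℝ) : √x ^ y = √(x ^ y) := by
  rw [sqrt_eq_rpow, sqrt_eq_rpow, ← rpow_mul hx, ← rpow_mul hx, mul_comm]

theorem sum_sqrt_mul_le_rpow_mul_rpow {ι : Type*} (s : Finset ι) {q p : ι → ℝ}
    (hq : ∀ i, 0 ≤ q i) (hp : ∀ i, 0 ≤ p i) {α : ℝ} (hα : 1 ≤ α) :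
    ∑ i ∈ s, √(q i * p i) ≤
      (∑ i ∈ s, √(q i)) ^ (1 - α⁻¹) * (√(∑ i ∈ s, q i) * √(∑ i ∈ s, p i ^ α)) ^ α⁻¹ :=
  calc ∑ i ∈ s, √(q i * p i) = ∑ i ∈ s, √(q i) * √(p i) := by
        simp_rw [sqrt_mul (hq _)]
    _ ≤ (∑ i ∈ s, √(q i)) ^ (1 - α⁻¹) * (∑ i ∈ s, √(q i) * √(p i) ^ α) ^ α⁻¹ :=
        inner_le_weight_mul_Lp_of_nonneg s hα _ _ (fun _ ↦ sqrt_nonneg _) (fun _ ↦ sqrt_nonneg _)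
    _ = (∑ i ∈ s, √(q i)) ^ (1 - α⁻¹) * (∑ i ∈ s, √(q i) * √(p i ^ α)) ^ α⁻¹ := by
        simp_rw [rpow_sqrt (hp _)]
    _ ≤ (∑ i ∈ s, √(q i)) ^ (1 - α⁻¹) * (√(∑ i ∈ s, q i) * √(∑ i ∈ s, p i ^ α)) ^ α⁻¹ := by
        gcongr
        exact sum_sqrt_mul_sqrt_le s hq fun i ↦ rpow_nonneg (hp i) α

theorem le_sub_mul_log_of_le_rpow_mul_rpow {A B c α : ℝ} (hα : 1 < α) (hA : 0 ≤ A)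
    (hB : 0 ≤ B) (hc0 : 0 < c) (hc : c ≤ A ^ (1 - α⁻¹) * √B ^ α⁻¹) :
    1 / (1 - α) * log B ≤ 2 * log A - 2 * α / (α - 1) * log c := by
  have hα0 : 0 < α := by linarith
  have hA0 : 0 < A := hA.lt_of_ne' fun h ↦ by
    rw [h, zero_rpow (sub_ne_zero.2 (inv_lt_one_of_one_lt₀ hα).ne'), zero_mul] at hc
    linarith
  have hB0 : 0 < B := hB.lt_of_ne' fun h ↦ by
    rw [h, sqrt_zero, zero_rpow (inv_ne_zero hα0.ne'), mul_zero] at hc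
    linarith
  have hlog : log c ≤ (1 - α⁻¹) * log A + α⁻¹ * (log B / 2) := by
    have := log_le_log hc0 hc
    rwa [log_mul (by positivity) (by positivity), log_rpow hA0, log_rpow (sqrt_pos.2 hB0),
      log_sqrt hB] at this
  have hlog' : 2 * α * log c ≤ 2 * (α - 1) * log A + log B := by
    have := mul_le_mul_of_nonneg_left hlog (by positivity : (0 : ℝ) ≤ 2 * α)
    field_simp at this
    linarith
  have hα1 : α - 1 ≠ 0 := by linarith
  have h1α : 1 - α ≠ 0 := by linarith
  have hsplit : 1 / (1 - α) * log B = 2 * log A - 2 * α / (α - 1) * log c -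
      (2 * (α - 1) * log A + log B - 2 * α * log c) / (α - 1) := by
    field_simp
    ring
  rw [hsplit]
  linarith [div_nonneg (sub_nonneg.2 hlog') (sub_pos.2 hα).le]

theorem renyi_entropy_overlap_bound_general (n : ℕ)
    (q p : Fin n → ℝ) (hq0 : ∀ i, 0 ≤ q i) (hp0 : ∀ i, 0 ≤ p i)
    (hqsum : ∑ i, q i = 1)
    (α : ℝ) (hα : 1 < α)
    (c : ℝ) (hc0 : 0 < c) (hc : c ≤ ∑ i, Real.sqrt (q i * p i)) :
    (1 / (1 - α)) * Real.log (∑ i, (p i) ^ α) ≤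
      2 * Real.log (∑ i, Real.sqrt (q i)) - (2 * α / (α - 1)) * Real.log c := by
  have hoverlap := sum_sqrt_mul_le_rpow_mul_rpow univ hq0 hp0 hα.le
  rw [hqsum, sqrt_one, one_mul] at hoverlap
  exact le_sub_mul_log_of_le_rpow_mul_rpow hα (sum_nonneg fun i _ ↦ sqrt_nonneg _)
    (sum_nonneg fun i _ ↦ rpow_nonneg (hp0 i) α) hc0 (hc.trans hoverlap)

/-- If c > 0 satisfies c ≤ ∑ᵢ √(qᵢpᵢ) for probability distributions (qᵢ), (pᵢ), then for
α > 1 the Rényi entropies S_α(p) = (1/(1-α)) log ∑ pᵢ^α and S_{1/2}(q) = 2 log ∑ √qᵢ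
satisfy S_α(p) ≤ S_{1/2}(q) - (2α/(α-1)) log c. -/
theorem renyi_entropy_overlap_bound (n : ℕ)
    (q p : Fin n → ℝ) (hq0 : ∀ i, 0 ≤ q i) (hp0 : ∀ i, 0 ≤ p i)
    (hqsum : ∑ i, q i = 1) (hpsum : ∑ i, p i = 1)
    (α : ℝ) (hα : 1 < α)
    (c : ℝ) (hc0 : 0 < c) (hc : c ≤ ∑ i, Real.sqrt (q i * p i)) :
    (1 / (1 - α)) * Real.log (∑ i, (p i) ^ α) ≤
      2 * Real.log (∑ i, Real.sqrt (q i)) - (2 * α / (α - 1)) * Real.log c :=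
  renyi_entropy_overlap_bound_general n q p hq0 hp0 hqsum α hα c hc0 hc
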